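/- arXiv:2008.11194 — 3 statements merged into one kernel-verified Lean document; each statement's English description precedes it below -/
import Mathlib

section
/- (Dual certificate of measurement optimality.) Let ρ_1, …, ρ_N be positive semidefinite n × n complex matrices, let p_1, …, p_N be nonnegative reals, let (E_i)_{i=1}^N be a POVM, and let K be a Hermitian matrix such that K - p_i ρ_i is positive semidefinite for every i and Re(tr K) = Σ_{i=1}^N p_i Re(tr(ρ_i E_i)). Then for every POVM (F_i)_{i=1}^N one has Σ_{i=1}^N p_i Re(tr(ρ_i F_i)) ≤ Σ_{i=1}^N p_i Re(tr(ρ_i E_i)). -/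
open Matrix
open scoped ComplexOrder

/-! Weak duality of the state-discrimination semidefinite program: the trace of a product of
positive semidefinite matrices is nonnegative, so `p i * tr (ρ i * F i) ≤ tr (K * F i)` for each `i`,
and summing over `i` with `∑ i, F i = 1` bounds the value of every POVM `F` by `tr K`, which `E`
attains. -/

namespace Matrix

variable {𝕜 n ι : Type*} [RCLike 𝕜] [Fintype n]

open scoped MatrixOrder in
theorem PosSemidef.trace_mul_nonneg {A B : Matrix n n 𝕜} (hA : A.PosSemidef)
    (hB : B.PosSemidef) : 0 ≤ (A * B).trace := by
  classical
  obtain ⟨C, rfl⟩ := CStarAlgebra.nonneg_iff_eq_star_mul_self.mp hA.nonneg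
  rw [star_eq_conjTranspose, mul_assoc, trace_mul_comm]
  simpa only [mul_assoc] using (hB.mul_mul_conjTranspose_same C).trace_nonneg

theorem trace_mul_le_trace_mul_of_posSemidef_sub {A K F : Matrix n n 𝕜}
    (hKA : (K - A).PosSemidef) (hF : F.PosSemidef) : (A * F).trace ≤ (K * F).trace := by
  have := hKA.trace_mul_nonneg hF
  rwa [sub_mul, trace_sub, sub_nonneg] at this

theorem sum_trace_mul_le_trace_of_posSemidef_sub [Fintype ι] [DecidableEq n]
    {A F : ι → Matrix n n 𝕜} {K : Matrix n n 𝕜} (hKA : ∀ i, (K - A i).PosSemidef)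
    (hF : ∀ i, (F i).PosSemidef) (hFsum : ∑ i, F i = 1) :
    ∑ i, (A i * F i).trace ≤ K.trace :=
  calc ∑ i, (A i * F i).trace ≤ ∑ i, (K * F i).trace :=
        Finset.sum_le_sum fun i _ ↦ trace_mul_le_trace_mul_of_posSemidef_sub (hKA i) (hF i)
    _ = K.trace := by rw [← trace_sum, ← Finset.mul_sum, hFsum, mul_one]

end Matrix

theorem dual_certificate_optimality_general {n N : ℕ}
    (ρ : Fin N → Matrix (Fin n) (Fin n) ℂ)
    (p : Fin N → ℝ)
    (E : Fin N → Matrix (Fin n) (Fin n) ℂ)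
    (K : Matrix (Fin n) (Fin n) ℂ)
    (hfeas : ∀ i, (K - (p i : ℂ) • ρ i).PosSemidef)
    (hattain : (K.trace).re = ∑ i, p i * ((ρ i * E i).trace).re) :
    ∀ F : Fin N → Matrix (Fin n) (Fin n) ℂ,
      (∀ i, (F i).PosSemidef) → (∑ i, F i = 1) →
      ∑ i, p i * ((ρ i * F i).trace).re ≤ ∑ i, p i * ((ρ i * E i).trace).re := by
  intro F hF hFsum
  have hdual := Complex.re_le_re (sum_trace_mul_le_trace_of_posSemidef_sub hfeas hF hFsum)
  simpa only [hattain, Complex.re_sum, smul_mul_assoc, trace_smul, smul_eq_mul,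
    Complex.re_ofReal_mul] using hdual

/-- Dual certificate of measurement optimality: if a POVM `E` attains the value of a
dual feasible point `K`, then `E` is optimal among all POVMs. -/
theorem dual_certificate_optimality {n N : ℕ}
    (ρ : Fin N → Matrix (Fin n) (Fin n) ℂ)
    (p : Fin N → ℝ)
    (E : Fin N → Matrix (Fin n) (Fin n) ℂ)
    (K : Matrix (Fin n) (Fin n) ℂ)
    (hρ : ∀ i, (ρ i).PosSemidef)
    (hp : ∀ i, 0 ≤ p i)
    (hE : ∀ i, (E i).PosSemidef)
    (hEsum : ∑ i, E i = 1)
    (hK : K.IsHermitian)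
    (hfeas : ∀ i, (K - (p i : ℂ) • ρ i).PosSemidef)
    (hattain : (K.trace).re = ∑ i, p i * ((ρ i * E i).trace).re) :
    ∀ F : Fin N → Matrix (Fin n) (Fin n) ℂ,
      (∀ i, (F i).PosSemidef) → (∑ i, F i = 1) →
      ∑ i, p i * ((ρ i * F i).trace).re ≤ ∑ i, p i * ((ρ i * E i).trace).re :=
  dual_certificate_optimality_general ρ p E K hfeas hattain
end

section
/- The unnormalized average state ρ̄ = Σ_{i ∈ Fin N} ρ_i commutes with V(π) for every permutation π of Fin N and with T(U) for every unitary d × d matrix U: V(π) · ρ̄ = ρ̄ · V(π) and T(U) · ρ̄ = ρ̄ · T(U). -/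
open Matrix
open scoped ComplexOrder

/-- The state `ρ_i = Φ⁺_{A_i B} ⊗ π_{A_i^c}`: the maximally entangled state between port
`A_i` and the target system `B`, tensored with the maximally mixed state on the remaining
ports. Entries: `ρ_i[((a,b),(a',b'))] = d^(-N) ⬝ [a i = b] ⬝ [a' i = b'] ⬝ ∏_{j ≠ i} [a j = a' j]`. -/
noncomputable def pbtRho (d N : ℕ) (i : Fin N) :
    Matrix ((Fin N → Fin d) × Fin d) ((Fin N → Fin d) × Fin d) ℂ :=
  fun x y => ((d : ℂ) ^ N)⁻¹ *
    ((if x.1 i = x.2 then 1 else 0) * (if y.1 i = y.2 then 1 else 0) *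
      ∏ j ∈ Finset.univ.erase i, if x.1 j = y.1 j then (1 : ℂ) else 0)

/-- `T(U) = U^{⊗N} ⊗ Ū`, acting on the ports `A_1 … A_N` and the target system `B`. -/
noncomputable def pbtT (d N : ℕ) (U : Matrix (Fin d) (Fin d) ℂ) :
    Matrix ((Fin N → Fin d) × Fin d) ((Fin N → Fin d) × Fin d) ℂ :=
  fun x y => (∏ j, U (x.1 j) (y.1 j)) * (starRingEnd ℂ) (U x.2 y.2)

/-- `V(π)`: the unitary permuting the `N` port tensor factors according to `π`, acting
trivially on the target system `B`. -/
noncomputable def pbtV (d N : ℕ) (π : Equiv.Perm (Fin N)) :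
    Matrix ((Fin N → Fin d) × Fin d) ((Fin N → Fin d) × Fin d) ℂ :=
  fun x y => (if ∀ j, x.1 (π j) = y.1 j then (1 : ℂ) else 0) *
    (if x.2 = y.2 then 1 else 0)

set_option linter.unreachableTactic false
set_option linter.unusedTactic false

private lemma pbt_sum_update {d N : ℕ} (i : Fin N) (z : Fin N → Fin d)
    (F : (Fin N → Fin d) → ℂ) :
    (∑ f : Fin N → Fin d,
      F f * ∏ j ∈ Finset.univ.erase i, (if f j = z j then (1:ℂ) else 0))
    = ∑ c : Fin d, F (Function.update z i c) := by
  classical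
  have key : ∀ f : Fin N → Fin d,
      F f * ∏ j ∈ Finset.univ.erase i, (if f j = z j then (1:ℂ) else 0)
      = if ∀ j ∈ Finset.univ.erase i, f j = z j then F f else 0 := by
    intro f
    rw [Finset.prod_boole]
    split <;> simp
  simp_rw [key]
  rw [← Finset.sum_subset
    (Finset.subset_univ (Finset.image (fun c : Fin d => Function.update z i c) Finset.univ))
    ?_]
  · rw [Finset.sum_image (fun a _ b _ h => Function.update_injective z i h)]
    refine Finset.sum_congr rfl fun c _ => ?_
    rw [if_pos]
    intro j hj
    exact Function.update_of_ne (Finset.mem_erase.1 hj).1 _ _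
  · intro f _ hf
    rw [if_neg]
    intro hP
    refine hf (Finset.mem_image.2 ⟨f i, Finset.mem_univ _, ?_⟩)
    funext j
    by_cases h : j = i
    · subst h; simp
    · rw [Function.update_of_ne h]
      exact (hP j (Finset.mem_erase.2 ⟨h, Finset.mem_univ _⟩)).symm


private lemma pbtV_apply_left {d N : ℕ} (π : Equiv.Perm (Fin N))
    (x y : (Fin N → Fin d) × Fin d) :
    pbtV d N π x y = if y = (fun j => x.1 (π j), x.2) then 1 else 0 := by
  have h : (y = ((fun j => x.1 (π j)), x.2)) ↔ ((∀ j, x.1 (π j) = y.1 j) ∧ x.2 = y.2) := by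
    rw [Prod.ext_iff]
    constructor
    · rintro ⟨h1, h2⟩; exact ⟨fun j => congrFun h1.symm j, h2.symm⟩
    · rintro ⟨h1, h2⟩; exact ⟨funext fun j => (h1 j).symm, h2.symm⟩
  unfold pbtV
  by_cases hy : y = ((fun j => x.1 (π j)), x.2)
  · obtain ⟨h1, h2⟩ := h.1 hy
    rw [if_pos h1, if_pos h2, if_pos hy, one_mul]
  · rw [if_neg hy]
    by_cases h1 : ∀ j, x.1 (π j) = y.1 j
    · rw [if_pos h1, if_neg (fun h2 => hy (h.2 ⟨h1, h2⟩)), one_mul]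
    · rw [if_neg h1, zero_mul]

private lemma pbtV_apply_right {d N : ℕ} (π : Equiv.Perm (Fin N))
    (y z : (Fin N → Fin d) × Fin d) :
    pbtV d N π y z = if y = (fun m => z.1 (π.symm m), z.2) then 1 else 0 := by
  have h : (y = ((fun m => z.1 (π.symm m)), z.2)) ↔ ((∀ j, y.1 (π j) = z.1 j) ∧ y.2 = z.2) := by
    rw [Prod.ext_iff]
    constructor
    · rintro ⟨h1, h2⟩
      refine ⟨fun j => ?_, h2⟩
      rw [congrFun h1 (π j)]
      simp
    · rintro ⟨h1, h2⟩
      refine ⟨funext fun m => ?_, h2⟩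
      have := h1 (π.symm m)
      simpa using this
  unfold pbtV
  by_cases hy : y = ((fun m => z.1 (π.symm m)), z.2)
  · obtain ⟨h1, h2⟩ := h.1 hy
    rw [if_pos h1, if_pos h2, if_pos hy, one_mul]
  · rw [if_neg hy]
    by_cases h1 : ∀ j, y.1 (π j) = z.1 j
    · rw [if_pos h1, if_neg (fun h2 => hy (h.2 ⟨h1, h2⟩)), one_mul]
    · rw [if_neg h1, zero_mul]

private lemma pbtV_mul_rho {d N : ℕ} (π : Equiv.Perm (Fin N)) (i : Fin N) :
    pbtV d N π * pbtRho d N i = pbtRho d N (π i) * pbtV d N π := by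
  ext x z
  rw [Matrix.mul_apply, Matrix.mul_apply]
  have hL : ∀ y, pbtV d N π x y * pbtRho d N i y z
      = if y = ((fun j => x.1 (π j)), x.2) then pbtRho d N i y z else 0 := fun y => by
    rw [pbtV_apply_left]; split <;> simp
  have hR : ∀ y, pbtRho d N (π i) x y * pbtV d N π y z
      = if y = ((fun m => z.1 (π.symm m)), z.2) then pbtRho d N (π i) x y else 0 := fun y => by
    rw [pbtV_apply_right]; split <;> simp
  simp_rw [hL, hR, Finset.sum_ite_eq', Finset.mem_univ, if_true]
  unfold pbtRho
  simp only [Equiv.symm_apply_apply]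
  congr 1
  congr 1
  exact Finset.prod_equiv π
    (fun j => by simp [Finset.mem_erase, π.injective.eq_iff])
    (fun j _ => by simp)

private lemma pbtT_mul_rho {d N : ℕ} (U : Matrix (Fin d) (Fin d) ℂ)
    (hU : U ∈ Matrix.unitaryGroup (Fin d) ℂ) (i : Fin N) :
    pbtT d N U * pbtRho d N i = pbtRho d N i * pbtT d N U := by
  classical
  have hUU : ∀ a b : Fin d, (∑ c, U a c * (starRingEnd ℂ) (U b c)) = if a = b then 1 else 0 := by
    intro a b
    have h1 : U * star U = 1 := Matrix.mem_unitaryGroup_iff.1 hU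
    calc (∑ c, U a c * (starRingEnd ℂ) (U b c)) = (U * Uᴴ) a b := by
          rw [Matrix.mul_apply]
          exact Finset.sum_congr rfl fun c _ => by
            rw [Matrix.conjTranspose_apply, starRingEnd_apply]
      _ = if a = b then 1 else 0 := by
          rw [← Matrix.star_eq_conjTranspose, h1, Matrix.one_apply]
  have hUU' : ∀ a b : Fin d, (∑ c, (starRingEnd ℂ) (U c a) * U c b) = if a = b then 1 else 0 := by
    intro a b
    have h2 : star U * U = 1 := Matrix.mem_unitaryGroup_iff'.1 hU
    calc (∑ c, (starRingEnd ℂ) (U c a) * U c b) = (Uᴴ * U) a b := by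
          rw [Matrix.mul_apply]
          exact Finset.sum_congr rfl fun c _ => by
            rw [Matrix.conjTranspose_apply, starRingEnd_apply]
      _ = if a = b then 1 else 0 := by
          rw [← Matrix.star_eq_conjTranspose, h2, Matrix.one_apply]
  ext x z
  rw [Matrix.mul_apply, Matrix.mul_apply, Fintype.sum_prod_type, Fintype.sum_prod_type]
  -- LHS
  have hbL : ∀ (f : Fin N → Fin d) (b : Fin d),
      pbtT d N U x (f, b) * pbtRho d N i (f, b) z
      = if f i = b then
          ((∏ j, U (x.1 j) (f j)) * (starRingEnd ℂ) (U x.2 b) *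
            (((d:ℂ)^N)⁻¹ * (if z.1 i = z.2 then 1 else 0)))
            * ∏ j ∈ Finset.univ.erase i, (if f j = z.1 j then (1:ℂ) else 0)
        else 0 := by
    intro f b
    simp only [pbtT, pbtRho]
    split <;> first | ring | (split <;> ring)
  have hbR : ∀ (f : Fin N → Fin d) (b : Fin d),
      pbtRho d N i x (f, b) * pbtT d N U (f, b) z
      = if f i = b then
          ((((d:ℂ)^N)⁻¹ * (if x.1 i = x.2 then 1 else 0)) *
            ((∏ j, U (f j) (z.1 j)) * (starRingEnd ℂ) (U b z.2)))
            * ∏ j ∈ Finset.univ.erase i, (if f j = x.1 j then (1:ℂ) else 0)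
        else 0 := by
    intro f b
    simp only [pbtRho, pbtT]
    have hflip : (∏ j ∈ Finset.univ.erase i, if x.1 j = f j then (1:ℂ) else 0)
        = ∏ j ∈ Finset.univ.erase i, if f j = x.1 j then (1:ℂ) else 0 :=
      Finset.prod_congr rfl fun j _ => if_congr eq_comm rfl rfl
    rw [hflip]
    split <;> split <;> first | ring | simp
  simp_rw [hbL, hbR, Finset.sum_ite_eq, Finset.mem_univ, if_true]
  rw [pbt_sum_update i z.1 _, pbt_sum_update i x.1 _]
  have hprodL : ∀ c : Fin d,
      (∏ j, U (x.1 j) (Function.update z.1 i c j))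
      = U (x.1 i) c * ∏ j ∈ Finset.univ.erase i, U (x.1 j) (z.1 j) := by
    intro c
    rw [← Finset.mul_prod_erase Finset.univ _ (Finset.mem_univ i), Function.update_self]
    congr 1
    exact Finset.prod_congr rfl fun j hj =>
      by rw [Function.update_of_ne (Finset.mem_erase.1 hj).1]
  have hprodR : ∀ c : Fin d,
      (∏ j, U (Function.update x.1 i c j) (z.1 j))
      = U c (z.1 i) * ∏ j ∈ Finset.univ.erase i, U (x.1 j) (z.1 j) := by
    intro c
    rw [← Finset.mul_prod_erase Finset.univ _ (Finset.mem_univ i), Function.update_self]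
    congr 1
    exact Finset.prod_congr rfl fun j hj =>
      by rw [Function.update_of_ne (Finset.mem_erase.1 hj).1]
  simp_rw [hprodL, hprodR, Function.update_self]
  trans ((∑ c : Fin d, U (x.1 i) c * (starRingEnd ℂ) (U x.2 c)) *
    ((∏ j ∈ Finset.univ.erase i, U (x.1 j) (z.1 j)) *
      (((d:ℂ)^N)⁻¹ * if z.1 i = z.2 then 1 else 0)))
  · rw [Finset.sum_mul]
    exact Finset.sum_congr rfl fun c _ => by ring
  trans ((∑ c : Fin d, (starRingEnd ℂ) (U c z.2) * U c (z.1 i)) *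
    ((((d:ℂ)^N)⁻¹ * if x.1 i = x.2 then 1 else 0) *
      ∏ j ∈ Finset.univ.erase i, U (x.1 j) (z.1 j)))
  · rw [hUU, hUU']
    have hz : (if z.2 = z.1 i then (1:ℂ) else 0) = if z.1 i = z.2 then 1 else 0 :=
      if_congr eq_comm rfl rfl
    rw [hz]
    ring
  · rw [Finset.sum_mul]
    exact Finset.sum_congr rfl fun c _ => by ring

/-- The pseudo-inverse square root of a matrix, obtained by functional calculus with the
function mapping `x ↦ x^(-1/2)` for `x > 0` and `0 ↦ 0`. -/
noncomputable def pinvSqrt {m : Type*} [Fintype m] [DecidableEq m]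
    (S : Matrix m m ℂ) : Matrix m m ℂ :=
  cfc (fun x : ℝ => if 0 < x then (Real.sqrt x)⁻¹ else 0) S

/-- The unnormalized average state `ρ̄ = ∑ᵢ ρ_i` commutes with every `V(π)` and every `T(U)`. -/
theorem pbtRhoBar_symmetries (d N : ℕ) (hd : 1 ≤ d) (hN : 1 ≤ N) :
    (∀ π : Equiv.Perm (Fin N),
      pbtV d N π * (∑ i, pbtRho d N i) = (∑ i, pbtRho d N i) * pbtV d N π) ∧
    (∀ U : Matrix (Fin d) (Fin d) ℂ, U ∈ Matrix.unitaryGroup (Fin d) ℂ →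
      pbtT d N U * (∑ i, pbtRho d N i) = (∑ i, pbtRho d N i) * pbtT d N U) := by
  constructor
  · intro π
    rw [Finset.mul_sum, Finset.sum_mul]
    simp_rw [pbtV_mul_rho]
    exact Equiv.sum_comp π (fun k => pbtRho d N k * pbtV d N π)
  · intro U hU
    rw [Finset.mul_sum, Finset.sum_mul]
    exact Finset.sum_congr rfl fun i _ => pbtT_mul_rho U hU i
end

section
/- (Symmetries of the dual operator X.) Define X = Σ_{i ∈ Fin N} ρ_i · ρ̄^{-1/2} · ρ_i · ρ̄^{-1/2}. Then X commutes with V(π) for every permutation π of Fin N and with T(U) for every unitary d × d matrix U: V(π) · X = X · V(π) and T(U) · X = X · T(U). -/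
open Matrix
open scoped ComplexOrder

/-!
Each of the symmetries `W = V(π)` and `W = T(U)` permutes the states under conjugation,
`W ρᵢ = ρ_{σ i} W` (with `σ = π`, resp. `σ = id` because `U ⊗ Ū` fixes the maximally entangled
state). Hence `W` commutes with `ρ̄`, so with every real function of `ρ̄` such as `ρ̄^(-1/2)`, and
therefore with `X`, whose summands it permutes.
-/

theorem commute_sum_of_mul_eq_mul {ι R : Type*} [Fintype ι] [Semiring R] {a : ι → R} {w : R}
    (σ : Equiv.Perm ι) (h : ∀ i, w * a i = a (σ i) * w) : Commute w (∑ i, a i) := by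
  rw [Commute, SemiconjBy, Finset.mul_sum, Finset.sum_mul, Finset.sum_congr rfl fun i _ => h i]
  exact Equiv.sum_comp σ (fun i => a i * w)

theorem commute_sum_mul_pinvSqrt_mul_pinvSqrt {ι m : Type*} [Fintype ι] [Fintype m]
    [DecidableEq m] {ρ : ι → Matrix m m ℂ} {W : Matrix m m ℂ} (σ : Equiv.Perm ι)
    (h : ∀ i, W * ρ i = ρ (σ i) * W) :
    Commute W (∑ i, ρ i * pinvSqrt (∑ j, ρ j) * ρ i * pinvSqrt (∑ j, ρ j)) := by
  set P := pinvSqrt (∑ j, ρ j)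
  have hP : Commute W P := ((commute_sum_of_mul_eq_mul σ h).symm.cfc_real _).symm
  refine commute_sum_of_mul_eq_mul σ fun i => ?_
  simp only [← mul_assoc, h, mul_assoc _ W, hP.eq]

theorem Fintype.prod_apply_update_eq_mul_prod_erase {ι α M : Type*} [Fintype ι] [DecidableEq ι]
    [CommMonoid M] (g : ι → α → M) (f : ι → α) (i : ι) (b : α) :
    ∏ j, g j (Function.update f i b j) = g i b * ∏ j ∈ Finset.univ.erase i, g j (f j) := by
  rw [← Finset.mul_prod_erase _ _ (Finset.mem_univ i), Function.update_self]
  congr 1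
  exact Finset.prod_congr rfl fun j hj => by rw [Function.update_of_ne (Finset.ne_of_mem_erase hj)]

section Unitary

variable {n α : Type*} [Fintype n] [DecidableEq n] [CommRing α] [StarRing α]
  {U : Matrix n n α}

theorem Matrix.sum_row_mul_star_row_of_mem_unitaryGroup (hU : U ∈ Matrix.unitaryGroup n α)
    (a a' : n) : ∑ b, U a b * star (U a' b) = if a = a' then 1 else 0 := by
  simpa [Matrix.mul_apply, Matrix.one_apply] using
    congrFun (congrFun (Matrix.mem_unitaryGroup_iff.mp hU) a) a'

theorem Matrix.sum_col_mul_star_col_of_mem_unitaryGroup (hU : U ∈ Matrix.unitaryGroup n α)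
    (a a' : n) : ∑ b, U b a * star (U b a') = if a = a' then 1 else 0 := by
  simpa [Matrix.mul_apply, Matrix.one_apply, mul_comm, eq_comm] using
    congrFun (congrFun (Matrix.mem_unitaryGroup_iff'.mp hU) a') a

end Unitary

section Ports

variable {d N : ℕ}

theorem pbtRho_apply (i : Fin N) (x y : (Fin N → Fin d) × Fin d) :
    pbtRho d N i x y =
      if x.1 i = x.2 ∧ y.1 i = y.2 ∧ ∀ j ≠ i, x.1 j = y.1 j then ((d : ℂ) ^ N)⁻¹ else 0 := by
  rw [pbtRho, Finset.prod_boole, ite_zero_mul_ite_zero, ite_zero_mul_ite_zero, mul_one, mul_ite,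
    mul_one, mul_zero]
  simp only [Finset.mem_erase, Finset.mem_univ, and_true, and_assoc, mul_one]

def portPerm (d : ℕ) (π : Equiv.Perm (Fin N)) :
    ((Fin N → Fin d) × Fin d) ≃ ((Fin N → Fin d) × Fin d) :=
  (π.symm.arrowCongr (Equiv.refl (Fin d))).prodCongr (Equiv.refl (Fin d))

theorem pbtV_eq_toMatrix (π : Equiv.Perm (Fin N)) :
    pbtV d N π = (portPerm d π).toPEquiv.toMatrix := by
  ext x y
  rw [pbtV, ite_zero_mul_ite_zero, mul_one]
  simp [portPerm, PEquiv.toMatrix_apply, Prod.ext_iff, funext_iff, eq_comm]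

theorem pbtV_mul_pbtRho (π : Equiv.Perm (Fin N)) (i : Fin N) :
    pbtV d N π * pbtRho d N i = pbtRho d N (π i) * pbtV d N π := by
  rw [pbtV_eq_toMatrix, PEquiv.toMatrix_toPEquiv_mul, PEquiv.mul_toMatrix_toPEquiv]
  ext x z
  simp only [submatrix_apply, id, pbtRho_apply, portPerm]
  simp [← π.forall_congr_right (q := fun j => ¬j = π i → x.1 j = z.1 (π.symm j))]

theorem pbtRho_apply_mk_left (i : Fin N) (f : Fin N → Fin d) (b : Fin d)
    (z : (Fin N → Fin d) × Fin d) :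
    pbtRho d N i (f, b) z =
      if f = Function.update z.1 i b then
        ((d : ℂ) ^ N)⁻¹ * (if z.1 i = z.2 then 1 else 0) else 0 := by
  rw [pbtRho_apply, mul_ite, mul_one, mul_zero, ← ite_and]
  exact if_congr (by rw [Function.eq_update_iff]; tauto) rfl rfl

theorem pbtRho_apply_mk_right (i : Fin N) (x : (Fin N → Fin d) × Fin d) (f : Fin N → Fin d)
    (b : Fin d) :
    pbtRho d N i x (f, b) =
      if f = Function.update x.1 i b then
        ((d : ℂ) ^ N)⁻¹ * (if x.1 i = x.2 then 1 else 0) else 0 := by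
  rw [pbtRho_apply, mul_ite, mul_one, mul_zero, ← ite_and]
  exact if_congr (by rw [Function.eq_update_iff]; grind) rfl rfl

variable {U : Matrix (Fin d) (Fin d) ℂ}

theorem pbtT_mul_pbtRho_apply (hU : U ∈ Matrix.unitaryGroup (Fin d) ℂ) (i : Fin N)
    (x z : (Fin N → Fin d) × Fin d) :
    (pbtT d N U * pbtRho d N i) x z = ((d : ℂ) ^ N)⁻¹ *
      ((if x.1 i = x.2 then 1 else 0) * (if z.1 i = z.2 then 1 else 0) *
        ∏ j ∈ Finset.univ.erase i, U (x.1 j) (z.1 j)) := by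
  rw [mul_apply, Fintype.sum_prod_type, Finset.sum_comm]
  simp only [pbtRho_apply_mk_left i _ _ z, mul_ite, mul_zero, mul_one, Finset.sum_ite_eq',
    Finset.mem_univ, if_true, pbtT, Fintype.prod_apply_update_eq_mul_prod_erase]
  by_cases hz : z.1 i = z.2
  · simp only [hz, if_true]
    rw [← Matrix.sum_row_mul_star_row_of_mem_unitaryGroup hU, Finset.sum_mul, Finset.mul_sum]
    exact Finset.sum_congr rfl fun b _ => by rw [starRingEnd_apply]; ring
  · simp [hz]

theorem pbtRho_mul_pbtT_apply (hU : U ∈ Matrix.unitaryGroup (Fin d) ℂ) (i : Fin N)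
    (x z : (Fin N → Fin d) × Fin d) :
    (pbtRho d N i * pbtT d N U) x z = ((d : ℂ) ^ N)⁻¹ *
      ((if x.1 i = x.2 then 1 else 0) * (if z.1 i = z.2 then 1 else 0) *
        ∏ j ∈ Finset.univ.erase i, U (x.1 j) (z.1 j)) := by
  rw [mul_apply, Fintype.sum_prod_type, Finset.sum_comm]
  simp only [pbtRho_apply_mk_right i x, ite_mul, zero_mul, Finset.sum_ite_eq', Finset.mem_univ,
    if_true, pbtT, Fintype.prod_apply_update_eq_mul_prod_erase (fun j a => U a (z.1 j))]
  by_cases hx : x.1 i = x.2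
  · simp only [hx, if_true]
    rw [← Matrix.sum_col_mul_star_col_of_mem_unitaryGroup hU, one_mul, Finset.sum_mul,
      Finset.mul_sum]
    exact Finset.sum_congr rfl fun b _ => by rw [starRingEnd_apply]; ring
  · simp [hx]

theorem pbtT_mul_pbtRho (hU : U ∈ Matrix.unitaryGroup (Fin d) ℂ) (i : Fin N) :
    pbtT d N U * pbtRho d N i = pbtRho d N i * pbtT d N U := by
  ext x z
  rw [pbtT_mul_pbtRho_apply hU, pbtRho_mul_pbtT_apply hU]

end Ports

theorem pbt_dual_operator_symmetries_general (d N : ℕ)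
    (X : Matrix ((Fin N → Fin d) × Fin d) ((Fin N → Fin d) × Fin d) ℂ)
    (hX : X = ∑ i, pbtRho d N i * pinvSqrt (∑ j, pbtRho d N j) * pbtRho d N i *
      pinvSqrt (∑ j, pbtRho d N j)) :
    (∀ π : Equiv.Perm (Fin N), pbtV d N π * X = X * pbtV d N π) ∧
    (∀ U : Matrix (Fin d) (Fin d) ℂ, U ∈ Matrix.unitaryGroup (Fin d) ℂ →
      pbtT d N U * X = X * pbtT d N U) := by
  subst hX
  exact ⟨fun π => commute_sum_mul_pinvSqrt_mul_pinvSqrt π (pbtV_mul_pbtRho π),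
    fun U hU => commute_sum_mul_pinvSqrt_mul_pinvSqrt (Equiv.refl _) (pbtT_mul_pbtRho hU)⟩

/-- Symmetries of the dual operator `X = ∑ᵢ ρᵢ ρ̄^(-1/2) ρᵢ ρ̄^(-1/2)`: it commutes with
`V(π)` for every permutation `π` and with `T(U)` for every unitary `U`. -/
theorem pbt_dual_operator_symmetries (d N : ℕ) (hd : 1 ≤ d) (hN : 1 ≤ N)
    (X : Matrix ((Fin N → Fin d) × Fin d) ((Fin N → Fin d) × Fin d) ℂ)
    (hX : X = ∑ i, pbtRho d N i * pinvSqrt (∑ j, pbtRho d N j) * pbtRho d N i *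
      pinvSqrt (∑ j, pbtRho d N j)) :
    (∀ π : Equiv.Perm (Fin N), pbtV d N π * X = X * pbtV d N π) ∧
    (∀ U : Matrix (Fin d) (Fin d) ℂ, U ∈ Matrix.unitaryGroup (Fin d) ℂ →
      pbtT d N U * X = X * pbtT d N U) :=
  pbt_dual_operator_symmetries_general d N X hX
end
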